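/- arXiv:1901.11270 — 5 statements merged into one kernel-verified Lean document; each statement's English description precedes it below -/
import Mathlib

section
/- Kleisli extension preserves neighbourhood functions: suppose h : ℕ → List ℕ → ℕ and f : ℕ → (ℕ → ℕ) → ℕ are such that h(n) is a neighbourhood function of f(n) for each n, and γ is a neighbourhood function of g : (ℕ → ℕ) → ℕ. Then the function δ : List ℕ → ℕ defined by δ(a) = sg(γ(a)) · h(γ(a) - 1)(a), where sg(0)=0 and sg(k+1)=1, is a neighbourhood function of the function λ α, f(g(α))(α). -/
/-- Initial segment of length `n` of `α`. -/
def seg (α : ℕ → ℕ) (n : ℕ) : List ℕ := List.ofFn fun i : Fin n => α i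

/-- `γ` is a neighbourhood function. -/
def IsNbhd (γ : List ℕ → ℕ) : Prop :=
  (∀ α : ℕ → ℕ, ∃ n, 0 < γ (seg α n)) ∧
  (∀ a : List ℕ, 0 < γ a → ∀ b : List ℕ, γ (a ++ b) = γ a)

/-- `γ` is a neighbourhood function of `f`. -/
def NbhdOf (γ : List ℕ → ℕ) (f : (ℕ → ℕ) → ℕ) : Prop :=
  IsNbhd γ ∧ ∀ (α : ℕ → ℕ) (n : ℕ), 0 < γ (seg α n) → f α = γ (seg α n) - 1

/-- `Q` is inductive. -/
def Ind (Q : List ℕ → Prop) : Prop := ∀ a : List ℕ, (∀ n : ℕ, Q (a ++ [n])) → Q a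

/-- Signum. -/
def sg : ℕ → ℕ
  | 0 => 0
  | _ + 1 => 1

lemma seg_mono (α : ℕ → ℕ) {n m : ℕ} (hnm : n ≤ m) :
    ∃ b, seg α m = seg α n ++ b := by
  refine ⟨List.ofFn (fun i : Fin (m - n) => α (n + i)), ?_⟩
  apply List.ext_getElem
  · simp [seg]; omega
  · intro i h1 h2
    simp only [seg, List.getElem_ofFn, List.getElem_append, List.getElem_ofFn,
      List.length_ofFn]
    split
    · rfl
    · congr 1; omega

lemma sg_pos {k : ℕ} (hk : 0 < k) : sg k = 1 := by
  cases k with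
  | zero => omega
  | succ n => rfl

theorem stmt5 (h : ℕ → List ℕ → ℕ) (f : ℕ → (ℕ → ℕ) → ℕ)
    (hh : ∀ n, NbhdOf (h n) (f n))
    (γ : List ℕ → ℕ) (g : (ℕ → ℕ) → ℕ) (hγ : NbhdOf γ g) :
    NbhdOf (fun a => sg (γ a) * h (γ a - 1) a) (fun α => f (g α) α) := by
  obtain ⟨⟨γtot, γbar⟩, γval⟩ := hγ
  refine ⟨⟨?_, ?_⟩, ?_⟩
  · intro α
    obtain ⟨n, hn⟩ := γtot α
    set k := γ (seg α n) - 1 with hk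
    obtain ⟨⟨htot, hbar⟩, hval⟩ := hh k
    obtain ⟨m, hm⟩ := htot α
    refine ⟨max n m, ?_⟩
    obtain ⟨b, hb⟩ := seg_mono α (le_max_left n m)
    obtain ⟨c, hc⟩ := seg_mono α (le_max_right n m)
    have hγeq : γ (seg α (max n m)) = γ (seg α n) := by rw [hb]; exact γbar _ hn b
    have hheq : h k (seg α (max n m)) = h k (seg α m) := by rw [hc]; exact hbar _ hm c
    simp only [hγeq, ← hk, hheq, sg_pos hn, one_mul]
    exact hm
  · intro a ha b
    simp only at ha ⊢
    have hγa : 0 < γ a := by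
      by_contra hc
      have : γ a = 0 := by omega
      simp [this, sg] at ha
    have hha : 0 < h (γ a - 1) a := by
      rcases Nat.eq_zero_or_pos (h (γ a - 1) a) with h0 | h0
      · simp [h0] at ha
      · exact h0
    have hγeq : γ (a ++ b) = γ a := γbar a hγa b
    rw [hγeq, ((hh (γ a - 1)).1).2 a hha b]
  · intro α n hn
    simp only at hn ⊢
    have hγn : 0 < γ (seg α n) := by
      by_contra hc
      have : γ (seg α n) = 0 := by omega
      simp [this, sg] at hn
    have hhn : 0 < h (γ (seg α n) - 1) (seg α n) := by
      rcases Nat.eq_zero_or_pos (h (γ (seg α n) - 1) (seg α n)) with h0 | h0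
      · simp [h0] at hn
      · exact h0
    have hg : g α = γ (seg α n) - 1 := γval α n hγn
    have := (hh (g α)).2 α n (by rw [hg]; exact hhn)
    rw [this, hg, sg_pos hγn, one_mul]
end

section
/- Let BT be the inductive type of Brouwer-operations with constructors η : ℕ → BT and sup : (ℕ → BT) → BT. Define the evaluation γ • α by η(n) • α = n and (sup φ) • α = φ(α 0) • (λ x, α(x+1)). Define δ : BT → List ℕ → ℕ by δ(η n)(a) = n+1, δ(sup φ)([]) = 0, δ(sup φ)(x :: a) = δ(φ x)(a). Then for every Brouwer-operation γ, δ(γ) is a neighbourhood function of the function λ α, γ • α. -/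
/-- Brouwer-operations. -/
inductive BT : Type
  | eta : ℕ → BT
  | sup : (ℕ → BT) → BT

/-- Evaluation of a Brouwer-operation at a sequence. -/
def BT.eval : BT → (ℕ → ℕ) → ℕ
  | BT.eta n, _ => n
  | BT.sup φ, α => BT.eval (φ (α 0)) (fun x => α (x + 1))

/-- The neighbourhood function determined by a Brouwer-operation. -/
def BT.delta : BT → List ℕ → ℕ
  | BT.eta n, _ => n + 1
  | BT.sup _, [] => 0
  | BT.sup φ, x :: a => BT.delta (φ x) a

lemma seg_succ (α : ℕ → ℕ) (n : ℕ) :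
    seg α (n + 1) = α 0 :: seg (fun x => α (x + 1)) n := by
  simp [seg, List.ofFn_succ]

theorem stmt7 (γ : BT) : NbhdOf (BT.delta γ) (fun α => BT.eval γ α) := by
  induction γ with
  | eta n =>
    refine ⟨⟨fun α => ⟨0, by simp [BT.delta]⟩, fun a _ b => rfl⟩, fun α m _ => by
      simp [BT.eval, BT.delta]⟩
  | sup φ ih =>
    refine ⟨⟨fun α => ?_, fun a ha b => ?_⟩, ?_⟩
    · obtain ⟨n, hn⟩ := (ih (α 0)).1.1 (fun x => α (x + 1))
      exact ⟨n + 1, by simpa [seg_succ, BT.delta] using hn⟩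
    · cases a with
      | nil => simp [BT.delta] at ha
      | cons x a => simpa [BT.delta] using (ih x).1.2 a ha b
    · intro α n h
      cases n with
      | zero => simp [seg, BT.delta] at h
      | succ n =>
        rw [seg_succ] at h ⊢
        simpa [BT.eval, BT.delta] using (ih (α 0)).2 (fun x => α (x + 1)) n h
end

section
/- Bar induction is preserved by Kleisli extension: let γ : List ℕ → ℕ be a neighbourhood function and g : ℕ → List ℕ → ℕ a family of neighbourhood functions. Define δ(a) = sg(γ(a)) · g(γ(a) - 1)(a). Fix a predicate Q on List ℕ. Suppose (i) for every a, if (∀ b, γ(a++b) > 0 → Q(a++b)) and Q is inductive then Q(a); (ii) for every n and every a, if (∀ b, g(n)(a++b) > 0 → Q(a++b)) and Q is inductive then Q(a). Then for every a, if (∀ b, δ(a++b) > 0 → Q(a++b)) and Q is inductive, then Q(a). -/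
theorem stmt10 (γ : List ℕ → ℕ) (hγ : IsNbhd γ)
    (g : ℕ → List ℕ → ℕ) (hg : ∀ n, IsNbhd (g n))
    (Q : List ℕ → Prop)
    (h1 : ∀ a : List ℕ, (∀ b : List ℕ, 0 < γ (a ++ b) → Q (a ++ b)) → Ind Q → Q a)
    (h2 : ∀ (n : ℕ) (a : List ℕ),
      (∀ b : List ℕ, 0 < g n (a ++ b) → Q (a ++ b)) → Ind Q → Q a) :
    ∀ a : List ℕ,
      (∀ b : List ℕ, 0 < sg (γ (a ++ b)) * g (γ (a ++ b) - 1) (a ++ b) → Q (a ++ b)) →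
      Ind Q → Q a := by
  intro a hbar hInd
  apply h1 a _ hInd
  intro b hb
  apply h2 (γ (a ++ b) - 1) (a ++ b) _ hInd
  intro c hc
  have hγeq : γ ((a ++ b) ++ c) = γ (a ++ b) := hγ.2 (a ++ b) hb c
  have := hbar (b ++ c)
  rw [← List.append_assoc] at this
  apply this
  rw [hγeq]
  obtain ⟨k, hk⟩ := Nat.exists_eq_succ_of_ne_zero hb.ne'
  rw [hk] at hc ⊢
  simpa [sg] using hc
end

section
/- If γ is a neighbourhood function whose bar S_γ(a) := γ(a) > 0 satisfies bar induction, then for every monotone bar P on List ℕ such that γ is a neighbourhood function of a function Y witnessing P (meaning P(ᾱ(Y α)) holds for all α), and every inductive predicate Q with P ⊆ Q, it holds that S_γ ⊆ Q, and consequently Q([]). -/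
lemma seg_getD (a : List ℕ) (m : ℕ) (hm : m ≤ a.length) :
    seg (fun i => a.getD i 0) m = a.take m := by
  apply List.ext_getElem
  · simp [seg, hm]
  · intro i h1 h2
    simp only [seg, List.getElem_ofFn, List.getElem_take]
    have : i < a.length := by simp [seg] at h1; omega
    simp [List.getElem?_eq_getElem this]

theorem stmt11 (γ : List ℕ → ℕ) (Y : (ℕ → ℕ) → ℕ) (hγ : NbhdOf γ Y)
    (hBI : ∀ Q : List ℕ → Prop, (∀ a, 0 < γ a → Q a) → Ind Q → Q [])
    (P : List ℕ → Prop)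
    (hPmon : ∀ a b : List ℕ, P a → P (a ++ b))
    (hPbar : ∀ α : ℕ → ℕ, ∃ n, P (seg α n))
    (hPY : ∀ α : ℕ → ℕ, P (seg α (Y α)))
    (Q : List ℕ → Prop) (hQ : Ind Q) (hPQ : ∀ a, P a → Q a) :
    (∀ a : List ℕ, 0 < γ a → Q a) ∧ Q [] := by
  have key : ∀ k : ℕ, ∀ a : List ℕ, 0 < γ a → γ a - 1 ≤ a.length + k → Q a := by
    intro k
    induction k with
    | zero =>
      intro a ha hlen
      set α : ℕ → ℕ := fun i => a.getD i 0 with hα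
      have hseg : seg α a.length = a := by
        rw [seg_getD a a.length le_rfl, List.take_length]
      have hpos : 0 < γ (seg α a.length) := by rw [hseg]; exact ha
      have hY : Y α = γ a - 1 := by
        have := hγ.2 α a.length hpos
        rwa [hseg] at this
      have hP : P (a.take (γ a - 1)) := by
        have := hPY α
        rwa [hY, seg_getD a (γ a - 1) (by omega)] at this
      have := hPmon _ (a.drop (γ a - 1)) hP
      rw [List.take_append_drop] at this
      exact hPQ a this
    | succ k ih =>
      intro a ha hlen
      apply hQ
      intro n
      have hγ' : γ (a ++ [n]) = γ a := hγ.1.2 a ha [n]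
      apply ih (a ++ [n]) (by rw [hγ']; exact ha)
      rw [hγ']
      simp only [List.length_append, List.length_cons, List.length_nil]
      omega
  have hSQ : ∀ a : List ℕ, 0 < γ a → Q a := fun a ha =>
    key (γ a - 1) a ha (by omega)
  exact ⟨hSQ, hBI Q hSQ hQ⟩
end

section
/- Let BT be the inductive type of Brouwer-operations (η : ℕ → BT, sup : (ℕ → BT) → BT) with evaluation η(n) • α = n and (sup φ) • α = φ(α 0) • (tail α). Define skip : BT → List ℕ → BT by skip(γ, []) = γ, skip(η n, x :: a) = skip(η n, a), skip(sup φ, x :: a) = skip(φ x, a), and Aux : (ℕ → BT) → BT → List ℕ → BT by Aux(f, η n, a) = skip(f n, a) and Aux(f, sup φ, a) = sup(λ x, Aux(f, φ x, a ++ [x])). Then f(γ • α) • (a * α) = Aux(f, γ, a) • α for all f : ℕ → BT, γ : BT, a : List ℕ, α : ℕ → ℕ, where a * α denotes prepending the list a to the sequence α. -/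
/-- Prepend a finite list to an infinite sequence. -/
def prep (a : List ℕ) (α : ℕ → ℕ) : ℕ → ℕ :=
  fun n => if h : n < a.length then a.get ⟨n, h⟩ else α (n - a.length)

/-- Skip the first `|a|` queries of a Brouwer-operation. -/
def BT.skip : BT → List ℕ → BT
  | γ, [] => γ
  | BT.eta n, _ :: a => BT.skip (BT.eta n) a
  | BT.sup φ, x :: a => BT.skip (φ x) a

/-- Auxiliary function for the Kleisli extension on Brouwer-operations. -/
def BT.Aux (f : ℕ → BT) : BT → List ℕ → BT
  | BT.eta n, a => BT.skip (f n) a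
  | BT.sup φ, a => BT.sup (fun x => BT.Aux f (φ x) (a ++ [x]))


lemma prep_cons_zero (x : ℕ) (a : List ℕ) (α : ℕ → ℕ) : prep (x :: a) α 0 = x := by
  simp [prep]

lemma prep_cons_tail (x : ℕ) (a : List ℕ) (α : ℕ → ℕ) :
    (fun k => prep (x :: a) α (k + 1)) = prep a α := by
  funext k
  simp only [prep, List.length_cons]
  by_cases h : k < a.length
  · simp [Nat.succ_lt_succ h, h]
  · simp [h, Nat.succ_lt_succ_iff, Nat.succ_sub_succ]

lemma eval_skip (δ : BT) (a : List ℕ) (α : ℕ → ℕ) :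
    BT.eval (BT.skip δ a) α = BT.eval δ (prep a α) := by
  induction a generalizing δ with
  | nil =>
    have : prep [] α = α := by funext n; simp [prep]
    simp [BT.skip, this]
  | cons x a ih =>
    cases δ with
    | eta n => simp [BT.skip, BT.eval, ih]
    | sup φ =>
      rw [show BT.skip (BT.sup φ) (x :: a) = BT.skip (φ x) a from rfl, ih]
      simp [BT.eval, prep_cons_zero, prep_cons_tail]

lemma prep_snoc (a : List ℕ) (α : ℕ → ℕ) :
    prep (a ++ [α 0]) (fun k => α (k + 1)) = prep a α := by
  funext n
  simp only [prep, List.length_append, List.length_singleton]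
  rcases lt_trichotomy n a.length with h | h | h
  · simp [h, Nat.lt_of_lt_of_le h (Nat.le_add_right _ _), List.getElem_append_left h]
  · subst h
    simp [Nat.lt_succ_self, List.getElem_append_right (le_refl _)]
  · have h1 : ¬ n < a.length := by omega
    have h2 : ¬ n < a.length + 1 := by omega
    have h3 : n - a.length - 1 + 1 = n - a.length := by omega
    simp [h1, h2, Nat.sub_sub, Nat.sub_add_comm] 
    rw [show n - (a.length + 1) = n - a.length - 1 by omega, h3]

theorem stmt15 (f : ℕ → BT) (γ : BT) (a : List ℕ) (α : ℕ → ℕ) :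
    BT.eval (f (BT.eval γ α)) (prep a α) = BT.eval (BT.Aux f γ a) α := by
  induction γ generalizing a α with
  | eta n => simp [BT.eval, BT.Aux, eval_skip]
  | sup φ ih =>
    rw [show BT.eval (BT.Aux f (BT.sup φ) a) α
        = BT.eval (BT.Aux f (φ (α 0)) (a ++ [α 0])) (fun k => α (k + 1)) from rfl,
      ← ih, prep_snoc]
    rfl
end
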